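/- arXiv:math/0211330 — 4 statements merged into one kernel-verified Lean document; each statement's English description precedes it below -/
import Mathlib

section
/- Let $k$ be a field and $S$ a finite subset of $M_n(k)$ generating $M_n(k)$ as a $k$-algebra such that $\dim_k kS^i - \dim_k kS^{i-1} \le \ell$ for a fixed positive integer $\ell$ and all $i \ge 1$ (where $kS^i$ is the span of all words in $S$ of length at most $i$). Then every word in $S$ of length $\ell(n+1)$ lies in the span of words of strictly smaller length. -/
/-- The span of all words (products) of at most `i` elements of `S`,
including the empty product `1`. -/
def wordSpan (k : Type*) {A : Type*} [Field k] [Ring A] [Algebra k A]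
    (S : Set A) (i : ℕ) : Submodule k A :=
  Submodule.span k {x | ∃ l : List A, l.length ≤ i ∧ (∀ a ∈ l, a ∈ S) ∧ l.prod = x}

/-!
Order words over the alphabet lexicographically and call a word reducible when, modulo
`kS^{i-1}`, its value is a combination of the values of lexicographically smaller words of the same
length `i`. Irreducible words of length `i ≥ 1` are linearly independent modulo `kS^{i-1}`, so
there are at most `ℓ` of them, and every nonempty factor of an irreducible word is irreducible.
Thus an irreducible word of length `ℓ(n+1)` has at most `ℓ` distinct factors of length `ℓ`. The
number of distinct factors of length `i` (taken at the first `ℓn + 1` positions) is `1` for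
`i = 0`, so it stalls at some `i < ℓ`: there the factor of length `i` determines the next letter.
Two of the positions `0, …, ℓ` carry the same factor of length `i`, which makes the word periodic
from the first of them on, with period `p ≤ ℓ`, long enough to contain a power `u^n`, `|u| = p`.
By Cayley–Hamilton the matrix `U^n` is a combination of the `U^j` with `j < n`, so the word lies
in `kS^{ℓ(n+1)-1}` and is reducible after all. Since every word of length `ℓ(n+1)` is reducible,
well-founded induction on the lexicographic order puts all of them in `kS^{ℓ(n+1)-1}`.
-/

namespace List

variable {α : Type*}

theorem append_lt_append_of_length_eq [LT α] {c c' : List α} (h : c' < c)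
    (hlen : c'.length = c.length) (Q' Q : List α) : c' ++ Q' < c ++ Q := by
  induction h with
  | nil => simp at hlen
  | rel hab => exact Lex.rel hab
  | cons _ ih => exact Lex.cons (ih (by simpa using hlen))

theorem take_mul_eq_flatten_replicate {v : List α} {p : ℕ} :
    ∀ n, (∀ a, a + p < n * p → v[a]? = v[a + p]?) →
      v.take (n * p) = (replicate n (v.take p)).flatten
  | 0, _ => by simp
  | n + 1, hper => by
    have hshift : (v.drop p).take (n * p) = v.take (n * p) := by
      ext a
      simp only [getElem?_take, getElem?_drop]
      split_ifs with ha
      · rw [add_comm, hper a (by rw [add_mul]; omega)]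
      · rfl
    rw [replicate_succ, flatten_cons, add_mul, one_mul, add_comm, take_add, hshift,
      take_mul_eq_flatten_replicate n fun a ha => hper a (by rw [add_mul]; omega)]

theorem getElem?_eq_of_take_eq {ω : List α} {m i t₁ t₂ : ℕ}
    (hext : ∀ t < m, ∀ t' < m, (ω.drop t).take i = (ω.drop t').take i →
      (ω.drop t).take (i + 1) = (ω.drop t').take (i + 1))
    (h₁₂ : t₁ ≤ t₂) (heq : (ω.drop t₁).take i = (ω.drop t₂).take i) :
    ∀ j, t₂ + j < m → ω[t₁ + j]? = ω[t₂ + j]? := by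
  have hstep : ∀ j, t₂ + j < m →
      (ω.drop (t₁ + j)).take (i + 1) = (ω.drop (t₂ + j)).take (i + 1) := by
    intro j
    induction j with
    | zero => exact fun h => hext t₁ (by omega) t₂ h heq
    | succ j ih =>
      intro hj
      have h := congrArg (drop 1) (ih (by omega))
      simp only [drop_take, drop_drop, add_tsub_cancel_right] at h
      exact hext _ (by omega) _ hj (by simpa only [add_assoc] using h)
  intro j hj
  have h := congrArg (·[0]?) (hstep j hj)
  simp only [getElem?_take, getElem?_drop] at h
  simpa using h

theorem exists_take_eq_imp_take_succ_eq [DecidableEq α] (ω : List α) {m ℓ : ℕ} (hm : 0 < m)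
    (hcard : ((Finset.range m).image fun t => (ω.drop t).take ℓ).card ≤ ℓ) :
    ∃ i, ((Finset.range m).image fun t => (ω.drop t).take i).card ≤ ℓ ∧
      ∀ t < m, ∀ t' < m, (ω.drop t).take i = (ω.drop t').take i →
        (ω.drop t).take (i + 1) = (ω.drop t').take (i + 1) := by
  set F : ℕ → Finset (List α) := fun i => (Finset.range m).image fun t => (ω.drop t).take i
  change (F ℓ).card ≤ ℓ at hcard
  have hF : ∀ i j, i ≤ j → (F j).image (take i) = F i := fun i j hij => by
    simp only [F, Finset.image_image]
    exact Finset.image_congr fun t _ => by simp [Function.comp, take_take, min_eq_left hij]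
  obtain ⟨i, hiℓ, hi⟩ : ∃ i < ℓ, (F (i + 1)).card ≤ (F i).card := by
    by_contra! hgrow
    have hF0 : (F 0).card = 1 := by
      simp only [F, take_zero]
      rw [Finset.image_const (Finset.nonempty_range_iff.2 hm.ne'), Finset.card_singleton]
    have : ∀ j ≤ ℓ, j + 1 ≤ (F j).card := by
      intro j
      induction j with
      | zero => simp [hF0]
      | succ j ih => intro hj; have := hgrow j (by omega); have := ih (by omega); omega
    have := this ℓ le_rfl
    omega
  refine ⟨i, (hF i ℓ hiℓ.le ▸ Finset.card_image_le).trans hcard, fun t ht t' ht' heq => ?_⟩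
  have hinj : Set.InjOn (take i) (F (i + 1) : Set (List α)) := Finset.injOn_of_card_image_eq
    (le_antisymm Finset.card_image_le (hF i (i + 1) (by omega) ▸ hi))
  refine hinj (Finset.mem_image_of_mem _ (Finset.mem_range.2 ht))
    (Finset.mem_image_of_mem _ (Finset.mem_range.2 ht')) ?_
  simpa [take_take] using heq

theorem exists_eq_append_flatten_replicate_append [DecidableEq α] {ω : List α} {ℓ n : ℕ}
    (hn : 0 < n) (hlen : ω.length = ℓ * (n + 1))
    (hcard : ∀ T : Finset (List α), (∀ c ∈ T, c <:+: ω ∧ c.length = ℓ) → T.card ≤ ℓ) :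
    ∃ P u Q, u ≠ [] ∧ ω = P ++ (replicate n u).flatten ++ Q := by
  obtain ⟨n, rfl⟩ : ∃ n', n = n' + 1 := ⟨n - 1, by omega⟩
  have hlen' : ω.length = ℓ * (n + 1) + ℓ := by rw [hlen]; ring
  have hℓ : ℓ ≤ ℓ * (n + 1) := Nat.le_mul_of_pos_right ℓ n.succ_pos
  obtain ⟨i, hcard_i, hext⟩ := exists_take_eq_imp_take_succ_eq ω (m := ℓ * (n + 1) + 1)
    (ℓ := ℓ) (by omega) <| hcard _ fun c hc => by
      obtain ⟨t, ht, rfl⟩ := Finset.mem_image.1 hc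
      refine ⟨(take_prefix _ _).isInfix.trans (drop_suffix _ _).isInfix, ?_⟩
      simp only [length_take, length_drop, Finset.mem_range] at ht ⊢
      omega
  obtain ⟨t₁, t₂, h₁₂, ht₂, heq⟩ : ∃ t₁ t₂, t₁ < t₂ ∧ t₂ ≤ ℓ ∧
      (ω.drop t₁).take i = (ω.drop t₂).take i := by
    obtain ⟨x, hx, y, hy, hxy, hfxy⟩ := Finset.exists_ne_map_eq_of_card_lt_of_maps_to
      (s := Finset.range (ℓ + 1)) (f := fun t => (ω.drop t).take i)
      (t := (Finset.range (ℓ * (n + 1) + 1)).image fun t => (ω.drop t).take i)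
      (by rw [Finset.card_range]; exact Nat.lt_succ_of_le hcard_i) fun t ht => by
        simp only [Finset.coe_range, Set.mem_Iio] at ht
        exact Finset.mem_image_of_mem _ (Finset.mem_range.2 (by omega))
    simp only [Finset.mem_range] at hx hy
    rcases lt_or_gt_of_ne hxy with h | h
    · exact ⟨x, y, h, by omega, hfxy⟩
    · exact ⟨y, x, h, by omega, hfxy.symm⟩
  set p := t₂ - t₁
  have hnp : t₁ + (n + 1) * p ≤ ℓ * (n + 1) := by
    have : n * p ≤ n * ℓ := Nat.mul_le_mul_left n (by omega)
    have : t₁ + p = t₂ := by omega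
    nlinarith
  have hperiod := getElem?_eq_of_take_eq hext h₁₂.le heq
  refine ⟨ω.take t₁, (ω.drop t₁).take p, (ω.drop t₁).drop ((n + 1) * p), ?_, ?_⟩
  · rw [← length_pos_iff, length_take, length_drop]; omega
  · rw [← take_mul_eq_flatten_replicate, append_assoc, take_append_drop, take_append_drop]
    intro a ha
    rw [getElem?_drop, getElem?_drop, show t₁ + (a + p) = t₂ + a by omega]
    exact hperiod a (by nlinarith)

end List

theorem Submodule.mul_mul_mem_span_image {R A : Type*} [CommSemiring R] [Semiring A]
    [Algebra R A] {s : Set A} {x : A} (a b : A) (hx : x ∈ Submodule.span R s) :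
    a * x * b ∈ Submodule.span R ((fun y => a * y * b) '' s) := by
  have h := Submodule.mem_map_of_mem (f := LinearMap.mulRight R b ∘ₗ LinearMap.mulLeft R a) hx
  rwa [Submodule.map_span] at h

section Words

variable {k A α : Type*} [Field k] [Ring A] [Algebra k A] {S : Set A}

theorem List.prod_mem_wordSpan {l : List A} (hl : ∀ a ∈ l, a ∈ S) {i : ℕ} (h : l.length ≤ i) :
    l.prod ∈ wordSpan k S i :=
  Submodule.subset_span ⟨l, h, hl, rfl⟩

theorem wordSpan_mono {i j : ℕ} (h : i ≤ j) : wordSpan k S i ≤ wordSpan k S j :=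
  Submodule.span_mono fun _ ⟨l, hl, hS, hp⟩ => ⟨l, hl.trans h, hS, hp⟩

theorem List.prod_mul_mul_prod_mem_wordSpan {P Q : List A} (hP : ∀ a ∈ P, a ∈ S)
    (hQ : ∀ a ∈ Q, a ∈ S) {i : ℕ} {x : A} (hx : x ∈ wordSpan k S i) :
    P.prod * x * Q.prod ∈ wordSpan k S (P.length + i + Q.length) := by
  refine Submodule.span_le.2 ?_ (Submodule.mul_mul_mem_span_image _ _ hx)
  rintro _ ⟨_, ⟨l, hl, hS, rfl⟩, rfl⟩
  change P.prod * l.prod * Q.prod ∈ _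
  rw [← List.prod_append, ← List.prod_append]
  refine List.prod_mem_wordSpan (fun a ha => ?_) (by simp; omega)
  simp only [List.mem_append] at ha
  rcases ha with (ha | ha) | ha
  exacts [hP a ha, hS a ha, hQ a ha]

variable [LinearOrder α] (k S) (e : α → A)

def IsReducibleWord (c : List α) : Prop :=
  (c.map e).prod ∈ Submodule.span k ((fun c' : List α => (c'.map e).prod) ''
      {c' | c'.length = c.length ∧ c' < c}) ⊔ wordSpan k S (c.length - 1)

variable {k S e}

theorem IsReducibleWord.of_isInfix (he : ∀ a, e a ∈ S) {c ω : List α}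
    (h : IsReducibleWord k S e c) (hc : c ≠ []) (hcω : c <:+: ω) : IsReducibleWord k S e ω := by
  obtain ⟨P, Q, rfl⟩ := hcω
  obtain ⟨y, hy, z, hz, hyz⟩ := Submodule.mem_sup.1 h
  have hmem : ∀ l : List α, ∀ a ∈ l.map e, a ∈ S := fun l => List.forall_mem_map.2 fun a _ => he a
  rw [IsReducibleWord, List.map_append, List.map_append, List.prod_append, List.prod_append,
    ← hyz, mul_add, add_mul]
  refine Submodule.add_mem _ (Submodule.mem_sup_left ?_) (Submodule.mem_sup_right ?_)
  · have h := Submodule.mul_mul_mem_span_image ((P.map e).prod) ((Q.map e).prod) hy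
    rw [Set.image_image] at h
    refine Submodule.span_mono ?_ h
    rintro _ ⟨c', ⟨hlen, hlt⟩, rfl⟩
    refine ⟨P ++ c' ++ Q, ⟨by simp [hlen], ?_⟩, by simp [mul_assoc]⟩
    exact List.append_lt_append_of_length_eq (List.append_left_lt hlt) (by simp [hlen]) Q Q
  · refine wordSpan_mono ?_ (List.prod_mul_mul_prod_mem_wordSpan (hmem P) (hmem Q) hz)
    have := List.length_pos_iff.2 hc
    simp only [List.length_append, List.length_map]
    omega

theorem card_add_finrank_le_of_not_isReducibleWord [FiniteDimensional k A]
    (he : ∀ a, e a ∈ S) {i : ℕ} (T : Finset (List α))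
    (hT : ∀ c ∈ T, c.length = i ∧ ¬IsReducibleWord k S e c) :
    T.card + Module.finrank k (wordSpan k S (i - 1)) ≤ Module.finrank k (wordSpan k S i) := by
  classical
  set W := wordSpan k S (i - 1)
  let V : Finset (List α) → Submodule k A := fun T =>
    Submodule.span k ((fun c : List α => (c.map e).prod) '' T) ⊔ W
  suffices h : T.card + Module.finrank k W ≤ Module.finrank k (V T) by
    refine h.trans <| Submodule.finrank_mono <|
      sup_le (Submodule.span_le.2 ?_) (wordSpan_mono (by omega))
    rintro _ ⟨c, hc, rfl⟩
    exact List.prod_mem_wordSpan (List.forall_mem_map.2 fun a _ => he a) (by simp [(hT c hc).1])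
  induction T using Finset.induction_on_max with
  | empty => simpa using Submodule.finrank_mono (le_sup_right : W ≤ V ∅)
  | insert a T hlt ih =>
    have ha := hT a (Finset.mem_insert_self a T)
    have hlt' : V T < V (insert a T) := by
      refine SetLike.lt_iff_le_and_exists.2 ⟨?_, (a.map e).prod, ?_, fun hmem => ha.2 ?_⟩
      · exact sup_le_sup_right (Submodule.span_mono (Set.image_mono (by simp))) W
      · exact Submodule.mem_sup_left (Submodule.subset_span ⟨a, by simp, rfl⟩)
      · rw [IsReducibleWord, ha.1]
        refine sup_le_sup_right (Submodule.span_mono ?_) W hmem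
        rintro _ ⟨c, hc, rfl⟩
        exact ⟨c, ⟨(hT c (Finset.mem_insert_of_mem hc)).1, hlt c hc⟩, rfl⟩
    rw [Finset.card_insert_of_notMem fun h => (hlt a h).false]
    have := ih fun c hc => hT c (Finset.mem_insert_of_mem hc)
    have := Submodule.finrank_lt_finrank_of_lt hlt'
    omega

theorem card_le_of_not_isReducibleWord [FiniteDimensional k A] (he : ∀ a, e a ∈ S) {ℓ : ℕ}
    (hgrowth : ∀ i,
      Module.finrank k (wordSpan k S (i + 1)) ≤ Module.finrank k (wordSpan k S i) + ℓ)
    {i : ℕ} (T : Finset (List α)) (hT : ∀ c ∈ T, c.length = i ∧ ¬IsReducibleWord k S e c) :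
    T.card ≤ ℓ := by
  have h := card_add_finrank_le_of_not_isReducibleWord he T hT
  cases i with
  | zero => rw [zero_tsub] at h; omega
  | succ i => rw [add_tsub_cancel_right] at h; have := hgrowth i; omega

theorem prod_mem_wordSpan_of_forall_isReducibleWord [Finite α] {L : ℕ}
    (h : ∀ c : List α, c.length = L → IsReducibleWord k S e c) {ω : List α}
    (hω : ω.length = L) :
    (ω.map e).prod ∈ wordSpan k S (L - 1) := by
  refine ((List.finite_length_eq α L).wellFoundedOn (r := (· < ·))).induction
    (P := fun ω => (ω.map e).prod ∈ wordSpan k S (L - 1)) hω fun ω hω ih => ?_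
  have hred := h ω hω
  rw [IsReducibleWord, hω] at hred
  refine (sup_le (Submodule.span_le.2 ?_) le_rfl : _ ≤ wordSpan k S (L - 1)) hred
  rintro _ ⟨c, ⟨hc, hlt⟩, rfl⟩
  exact ih c hc hlt

end Words

theorem Matrix.pow_card_mem_span_pow_lt {ι R : Type*} [Fintype ι] [DecidableEq ι] [Nonempty ι]
    [CommRing R] [Nontrivial R] (U : Matrix ι ι R) :
    U ^ Fintype.card ι ∈ Submodule.span R ((U ^ ·) '' Set.Iio (Fintype.card ι)) := by
  have hdeg : (Polynomial.X ^ Fintype.card ι %ₘ U.charpoly).natDegree < Fintype.card ι := by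
    simpa using Polynomial.natDegree_modByMonic_lt _ U.charpoly_monic fun h => by
      simpa using congrArg Polynomial.natDegree h
  rw [U.pow_eq_aeval_mod_charpoly, Polynomial.aeval_eq_sum_range' hdeg]
  exact Submodule.sum_mem _ fun j hj => Submodule.smul_mem _ _
    (Submodule.subset_span ⟨j, Finset.mem_range.1 hj, rfl⟩)

theorem prod_append_pow_append_mem_wordSpan {k ι α : Type*} [Field k] [Fintype ι]
    [DecidableEq ι] [Nonempty ι] {S : Set (Matrix ι ι k)} {e : α → Matrix ι ι k} (he : ∀ a, e a ∈ S)
    (P u Q : List α) (hu : u ≠ []) :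
    ((P ++ (List.replicate (Fintype.card ι) u).flatten ++ Q).map e).prod ∈
      wordSpan k S ((P ++ (List.replicate (Fintype.card ι) u).flatten ++ Q).length - 1) := by
  set U := (u.map e).prod
  have hev : ∀ j, ((P ++ (List.replicate j u).flatten ++ Q).map e).prod =
      (P.map e).prod * U ^ j * (Q.map e).prod := by
    simp [List.prod_flatten, U, mul_assoc]
  rw [hev]
  refine Submodule.span_le.2 ?_ (Submodule.mul_mul_mem_span_image _ _ U.pow_card_mem_span_pow_lt)
  rintro _ ⟨_, ⟨j, hj, rfl⟩, rfl⟩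
  change (P.map e).prod * U ^ j * (Q.map e).prod ∈ _
  rw [← hev]
  refine List.prod_mem_wordSpan (List.forall_mem_map.2 fun a _ => he a) ?_
  have := List.length_pos_iff.2 hu
  have := Nat.mul_le_mul_right u.length (Nat.succ_le_of_lt hj)
  simp only [List.length_map, List.length_append, List.length_flatten, List.map_replicate,
    List.sum_replicate, smul_eq_mul, Nat.succ_mul] at this ⊢
  omega

theorem stmt_0_general {k : Type*} [Field k] (n ℓ : ℕ) (hℓ : 1 ≤ ℓ)
    (S : Finset (Matrix (Fin n) (Fin n) k))
    (hgrowth : ∀ i : ℕ, Module.finrank k (wordSpan k (S : Set (Matrix (Fin n) (Fin n) k)) (i + 1)) ≤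
      Module.finrank k (wordSpan k (S : Set (Matrix (Fin n) (Fin n) k)) i) + ℓ)
    (w : List (Matrix (Fin n) (Fin n) k)) (hw : ∀ a ∈ w, a ∈ S)
    (hlen : w.length = ℓ * (n + 1)) :
    w.prod ∈ wordSpan k (S : Set (Matrix (Fin n) (Fin n) k)) (ℓ * (n + 1) - 1) := by
  rcases Nat.eq_zero_or_pos n with rfl | hn
  · rw [Subsingleton.elim w.prod 0]
    exact zero_mem _
  have : Nonempty (Fin n) := ⟨⟨0, hn⟩⟩
  -- The alphabet is the set of positions of `w`, read through `w.get`; `w` is then `finRange`.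
  have he : ∀ d, w.get d ∈ (S : Set (Matrix (Fin n) (Fin n) k)) := fun d => hw _ (w.get_mem d)
  have hred : ∀ ω : List (Fin w.length), ω.length = ℓ * (n + 1) →
      IsReducibleWord k S w.get ω := by
    intro ω hω
    by_contra hirr
    obtain ⟨P, u, Q, hu, rfl⟩ := List.exists_eq_append_flatten_replicate_append hn hω
      fun T hT => card_le_of_not_isReducibleWord he hgrowth T fun c hc =>
        ⟨(hT c hc).2, fun hc_red => hirr <| hc_red.of_isInfix he
          (List.ne_nil_of_length_pos ((hT c hc).2 ▸ hℓ)) (hT c hc).1⟩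
    have := prod_append_pow_append_mem_wordSpan he P u Q hu
    rw [Fintype.card_fin] at this
    exact hirr (Submodule.mem_sup_right this)
  simpa [List.map_get_finRange] using
    prod_mem_wordSpan_of_forall_isReducibleWord hred (List.length_finRange.trans hlen)

theorem stmt_0 {k : Type*} [Field k] (n ℓ : ℕ) (hℓ : 1 ≤ ℓ)
    (S : Finset (Matrix (Fin n) (Fin n) k))
    (hgen : Algebra.adjoin k (S : Set (Matrix (Fin n) (Fin n) k)) = ⊤)
    (hgrowth : ∀ i : ℕ, Module.finrank k (wordSpan k (S : Set (Matrix (Fin n) (Fin n) k)) (i + 1)) ≤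
      Module.finrank k (wordSpan k (S : Set (Matrix (Fin n) (Fin n) k)) i) + ℓ)
    (w : List (Matrix (Fin n) (Fin n) k)) (hw : ∀ a ∈ w, a ∈ S)
    (hlen : w.length = ℓ * (n + 1)) :
    w.prod ∈ wordSpan k (S : Set (Matrix (Fin n) (Fin n) k)) (ℓ * (n + 1) - 1) :=
  stmt_0_general n ℓ hℓ S hgrowth w hw hlen
end

section
/- Let $S$ be a finite totally ordered set, let $\ell, n \ge 1$, and let $w = (a_1,\dots,a_m)$ be a sequence in $S$ of length $m = \ell(n+1)$. Consider the $\ell+1$ consecutive subsequences $v_j = (a_j,\dots,a_{\ell n + j - 1})$ for $1 \le j \le \ell+1$. If there exist indices $p < q \le \ell+1$ with $v_p = v_q$ (as sequences), then setting $u = (a_p,\dots,a_{q-1})$, the sequence $v_p$ begins with $n$ consecutive copies of $u$; that is, $(a_p,\dots,a_{p + n(q-p) - 1})$ is $u$ repeated $n$ times. -/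
theorem stmt_3 {S : Type*} [Fintype S] [LinearOrder S] (ℓ n : ℕ) (hℓ : 1 ≤ ℓ) (hn : 1 ≤ n)
    (a : ℕ → S) (p q : ℕ) (hp : 1 ≤ p) (hpq : p < q) (hq : q ≤ ℓ + 1)
    (hwin : ∀ j < ℓ * n, a (p + j) = a (q + j)) :
    ∀ j < n * (q - p), a (p + j) = a (p + j % (q - p)) := by
  set d := q - p with hd
  have hd1 : 1 ≤ d := Nat.sub_pos_of_lt hpq
  have hdl : d ≤ ℓ := by omega
  intro j
  induction j using Nat.strong_induction_on with
  | _ j ih =>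
    intro hj
    by_cases h : j < d
    · rw [Nat.mod_eq_of_lt h]
    · push_neg at h
      have hjd : j - d < ℓ * n := by
        have h1 : n * d ≤ n * ℓ := Nat.mul_le_mul_left n hdl
        have h2 : ℓ * n = n * ℓ := Nat.mul_comm ℓ n
        omega
      have h1 : a (p + (j - d)) = a (q + (j - d)) := hwin _ hjd
      have h2 : q + (j - d) = p + j := by omega
      rw [h2] at h1
      have h3 : j % d = (j - d) % d := by
        conv_lhs => rw [show j = j - d + d by omega]
        simp [Nat.add_mod_right]
      rw [h3, ← h1]
      exact ih (j - d) (by omega) (by omega)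
end

section
/- Let $R$ be an affine $k$-algebra of GK dimension $1$ with a finite generating set $T$ satisfying $\dim_k kT^i - \dim_k kT^{i-1} \le c$ for all $i$, and let $\rho: R \to M_n(k)$ be a $k$-algebra homomorphism such that $\bar{k}\rho(R) = M_n(\bar{k})$ (an irreducible representation). Then $n \le \tfrac{1}{2}\bigl(c^2 + \sqrt{c^4 + 4c^2 - 4c + 4}\bigr)$. -/
/-!
Write `V i = wordSpan k T i` and `N = c (n + 1)`. Every word `w` of length `N` in `T` has
`ρ w ∈ ρ (V (N - 1))`. Take a lexicographically least counterexample and its `c + 1` subwords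
of length `c n` starting at positions `0, …, c`. If two of them coincide, `w` contains an
`n`-th power `uⁿ`, and Cayley–Hamilton expresses `ρ(u)ⁿ` through lower powers, i.e. through
shorter words. Otherwise, as `dim V (c n) / V (c n - 1) ≤ c`, a nontrivial combination of the
subwords lies in `V (c n - 1)`; solving it for the lexicographically largest subword with nonzero
coefficient writes `ρ w` through shorter words and lexicographically smaller words of length `N`.
Hence `ρ R = ρ (V (N - 1))`, and irreducibility gives
`n² ≤ dim ρ R ≤ dim V (N - 1) ≤ 1 + c (N - 1)`, a quadratic inequality in `n`.
-/

open Module Submodule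

theorem Set.Finite.lists_length_le {α : Type*} {S : Set α} (hS : S.Finite) (i : ℕ) :
    {l : List α | l.length ≤ i ∧ ∀ a ∈ l, a ∈ S}.Finite := by
  have := hS.to_subtype
  refine ((List.finite_length_le S i).image (List.map (↑))).subset ?_
  rintro l ⟨hl, hlS⟩
  lift l to List S using hlS
  exact ⟨l, by simpa using hl, rfl⟩

section WordSpan

variable {k R : Type*} [Field k] [Ring R] [Algebra k R] {S : Set R}

theorem list_prod_mem_wordSpan {l : List R} (hlS : ∀ a ∈ l, a ∈ S) {i : ℕ}
    (hl : l.length ≤ i) : l.prod ∈ wordSpan k S i :=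
  subset_span ⟨l, hl, hlS, rfl⟩

variable (k S) in
theorem wordSpan_mono_s6 : Monotone (wordSpan k S) :=
  fun _ _ hij => span_mono fun _ ⟨l, hl, hlS, hx⟩ => ⟨l, hl.trans hij, hlS, hx⟩

theorem wordSpan_mul_wordSpan_le (i j : ℕ) :
    wordSpan k S i * wordSpan k S j ≤ wordSpan k S (i + j) := by
  rw [wordSpan, wordSpan, span_mul_span, span_le]
  rintro _ ⟨_, ⟨l, hl, hlS, rfl⟩, _, ⟨m, hm, hmS, rfl⟩, rfl⟩
  show l.prod * m.prod ∈ _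
  rw [← List.prod_append]
  refine list_prod_mem_wordSpan (fun a ha => ?_) (by simp only [List.length_append]; omega)
  rcases List.mem_append.1 ha with ha | ha
  exacts [hlS a ha, hmS a ha]

theorem mul_mem_wordSpan {i j : ℕ} {x y : R} (hx : x ∈ wordSpan k S i)
    (hy : y ∈ wordSpan k S j) : x * y ∈ wordSpan k S (i + j) :=
  wordSpan_mul_wordSpan_le i j (mul_mem_mul hx hy)

theorem finrank_wordSpan_zero_le : finrank k (wordSpan k S 0) ≤ 1 := by
  have h : wordSpan k S 0 = k ∙ 1 := by
    rw [wordSpan]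
    congr 1
    ext x
    simp only [nonpos_iff_eq_zero, List.length_eq_zero_iff, Set.mem_ofPred_eq,
      Set.mem_singleton_iff]
    constructor
    · rintro ⟨l, rfl, -, rfl⟩
      rfl
    · rintro rfl
      exact ⟨[], rfl, by simp, rfl⟩
  classical
  rw [h]
  simpa using finrank_span_le_card (R := k) ({1} : Set R)

theorem finrank_wordSpan_le {c : ℕ}
    (hgrowth : ∀ i, finrank k (wordSpan k S (i + 1)) ≤ finrank k (wordSpan k S i) + c)
    (i : ℕ) : finrank k (wordSpan k S i) ≤ 1 + c * i := by
  induction i with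
  | zero => simpa using finrank_wordSpan_zero_le
  | succ i ih => linarith [hgrowth i, mul_add_one c i]

theorem iSup_wordSpan (hS : Algebra.adjoin k S = ⊤) : ⨆ i, wordSpan k S i = ⊤ := by
  rw [eq_top_iff, ← Algebra.top_toSubmodule, ← hS, Algebra.adjoin_eq_span, span_le]
  intro x hx
  obtain ⟨l, hlS, rfl⟩ := Submonoid.exists_list_of_mem_closure hx
  exact mem_iSup_of_mem l.length (list_prod_mem_wordSpan hlS le_rfl)

instance (T : Finset R) (i : ℕ) : FiniteDimensional k (wordSpan k (T : Set R) i) := by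
  refine FiniteDimensional.span_of_finite k
    (((T.finite_toSet.lists_length_le i).image List.prod).subset ?_)
  rintro _ ⟨l, hl, hlT, rfl⟩
  exact ⟨l, ⟨hl, hlT⟩, rfl⟩

end WordSpan

theorem Submodule.exists_sum_smul_mem_of_finrank_lt {k M ι : Type*} [Field k] [AddCommGroup M]
    [Module k M] [Fintype ι] {P Q : Submodule k M} [FiniteDimensional k Q] (hPQ : P ≤ Q)
    (hdim : finrank k Q < finrank k P + Fintype.card ι) (v : ι → M) (hv : ∀ i, v i ∈ Q) :
    ∃ g : ι → k, ∑ i, g i • v i ∈ P ∧ ∃ i, g i ≠ 0 := by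
  let x : ι → Q := fun i => ⟨v i, hv i⟩
  let P' := P.comap Q.subtype
  have hdep : ¬ LinearIndependent k (P'.mkQ ∘ x) := fun hli => by
    have h1 : Fintype.card ι ≤ finrank k (Q ⧸ P') := hli.fintype_card_le_finrank
    have h2 : finrank k (Q ⧸ P') + finrank k P' = finrank k Q := P'.finrank_quotient_add_finrank
    have h3 : finrank k P' = finrank k P := (comapSubtypeEquivOfLe hPQ).finrank_eq
    omega
  obtain ⟨g, hg, i, hi⟩ := Fintype.not_linearIndependent_iff.1 hdep
  refine ⟨g, ?_, i, hi⟩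
  have : ∑ i, g i • x i ∈ P' := by
    rw [← P'.ker_mkQ, LinearMap.mem_ker, map_sum]
    simpa using hg
  simpa [P', x] using this

theorem Submodule.mem_of_sum_smul_mem {k M ι : Type*} [Field k] [AddCommGroup M] [Module k M]
    [Fintype ι] [DecidableEq ι] {p : Submodule k M} {g : ι → k} {v : ι → M}
    (hsum : ∑ i, g i • v i ∈ p) {i₀ : ι} (hi₀ : g i₀ ≠ 0)
    (hrest : ∀ i ≠ i₀, g i ≠ 0 → v i ∈ p) : v i₀ ∈ p := by
  rw [← Finset.add_sum_erase _ _ (Finset.mem_univ i₀)] at hsum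
  have hrest' : ∑ i ∈ Finset.univ.erase i₀, g i • v i ∈ p := by
    refine sum_mem fun i hi => ?_
    by_cases hgi : g i = 0
    · simp [hgi]
    · exact smul_mem _ _ (hrest i (Finset.ne_of_mem_erase hi) hgi)
  exact (smul_mem_iff p hi₀).1 ((add_mem_cancel_right hrest').1 hsum)

theorem Matrix.pow_card_mem_span_pow_lt_s6 {k m : Type*} [Field k] [Fintype m] [DecidableEq m]
    (A : Matrix m m k) :
    A ^ Fintype.card m ∈ span k ((A ^ ·) '' Set.Iio (Fintype.card m)) := by
  have h := A.aeval_self_charpoly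
  rw [A.charpoly_monic.as_sum, A.charpoly_natDegree_eq_dim] at h
  simp only [map_add, map_pow, Polynomial.aeval_X, map_sum, map_mul, Polynomial.aeval_C,
    Algebra.algebraMap_eq_smul_one, smul_mul_assoc, one_mul] at h
  rw [eq_neg_of_add_eq_zero_left h]
  exact neg_mem (sum_mem fun i hi => smul_mem _ _ (subset_span ⟨i, by simpa using hi, rfl⟩))

theorem List.take_mul_eq_flatten_replicate_s6 {α : Type*} {v : List α} {d L : ℕ}
    (h : v.take L = (v.drop d).take L) :
    ∀ m, m * d ≤ L + d → v.take (m * d) = (List.replicate m (v.take d)).flatten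
  | 0, _ => by simp
  | m + 1, hm => by
    have hmL : m * d ≤ L := by rw [add_one_mul] at hm; omega
    have hshift : (v.drop d).take (m * d) = v.take (m * d) := by
      simpa only [List.take_take, min_eq_left hmL] using (congrArg (List.take (m * d)) h).symm
    rw [add_one_mul, add_comm, List.take_add, hshift, take_mul_eq_flatten_replicate_s6 h m (by omega),
      List.replicate_succ, List.flatten_cons]

theorem List.append_lt_append_of_lt_of_length_eq {α : Type*} [LT α] {u v : List α} (h : u < v)
    (hlen : u.length = v.length) (x y z : List α) : x ++ u ++ y < x ++ v ++ z := by
  rw [List.append_assoc, List.append_assoc]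
  refine List.append_left_lt ?_
  induction h with
  | nil => simp at hlen
  | rel hab => exact List.Lex.rel hab
  | cons _ ih => exact List.Lex.cons (ih (by simpa using hlen))

theorem le_half_add_sqrt_of_sq_le {x b e : ℝ} (h : x ^ 2 ≤ b * x + e) :
    x ≤ (b + √(b ^ 2 + 4 * e)) / 2 := by
  have : |2 * x - b| ≤ √(b ^ 2 + 4 * e) := Real.abs_le_sqrt (by nlinarith)
  linarith [le_abs_self (2 * x - b)]

section Words

variable {k R A : Type*} [Field k] [Ring R] [Algebra k R] [Ring A] [Algebra k A]
  (ρ : R →ₐ[k] A) {S : Set R}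

theorem exists_sum_smul_list_prod_mem_wordSpan {T : Finset R} {c L : ℕ}
    (hgrowth : ∀ i, finrank k (wordSpan k (T : Set R) (i + 1)) ≤
      finrank k (wordSpan k (T : Set R) i) + c)
    (hL : 0 < L) {W : Fin (c + 1) → List R} (hWT : ∀ s, ∀ a ∈ W s, a ∈ (T : Set R))
    (hWlen : ∀ s, (W s).length = L) :
    ∃ g : Fin (c + 1) → k, ∑ s, g s • (W s).prod ∈ wordSpan k (T : Set R) (L - 1) ∧
      ∃ s, g s ≠ 0 := by
  have hgrowthL : finrank k (wordSpan k (T : Set R) L) <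
      finrank k (wordSpan k (T : Set R) (L - 1)) + Fintype.card (Fin (c + 1)) := by
    have := hgrowth (L - 1)
    rw [Nat.sub_add_cancel hL] at this
    simp only [Fintype.card_fin]
    omega
  exact exists_sum_smul_mem_of_finrank_lt (wordSpan_mono_s6 k _ (Nat.sub_le L 1)) hgrowthL
    (fun s => (W s).prod) (fun s => list_prod_mem_wordSpan (hWT s) (hWlen s).le)

theorem map_prod_mem_of_eq_append_flatten_replicate {n : ℕ}
    (hpow : ∀ a : A, a ^ n ∈ span k ((a ^ ·) '' Set.Iio n))
    {w x u y : List R} (hwS : ∀ a ∈ w, a ∈ S)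
    (hw : w = x ++ (List.replicate n u).flatten ++ y) (hu : u ≠ []) :
    ρ w.prod ∈ (wordSpan k S (w.length - 1)).map ρ.toLinearMap := by
  subst hw
  have hprod (i : ℕ) :
      (x ++ (List.replicate i u).flatten ++ y).prod = x.prod * u.prod ^ i * y.prod := by
    simp [List.prod_flatten, mul_assoc]
  have hlen (i : ℕ) : (x ++ (List.replicate i u).flatten ++ y).length =
      x.length + i * u.length + y.length := by
    simp [List.length_flatten, add_assoc]
  have hlower : ∀ i < n, ρ x.prod * ρ u.prod ^ i * ρ y.prod ∈
      (wordSpan k S ((x ++ (List.replicate n u).flatten ++ y).length - 1)).map ρ.toLinearMap := by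
    intro i hi
    rw [← map_pow, ← map_mul, ← map_mul, ← hprod]
    refine mem_map_of_mem (list_prod_mem_wordSpan (fun a ha => hwS a ?_) ?_)
    · simp only [List.mem_append, List.mem_flatten, List.mem_replicate] at ha ⊢
      grind
    · have : i * u.length + u.length ≤ n * u.length := by
        rw [← add_one_mul]; exact Nat.mul_le_mul_right _ hi
      have := List.length_pos_iff.2 hu
      rw [hlen, hlen]
      omega
  have hpow' :=
    mem_map_of_mem (f := LinearMap.mulLeftRight k (ρ x.prod, ρ y.prod)) (hpow (ρ u.prod))
  rw [map_span] at hpow'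
  rw [hprod, map_mul, map_mul, map_pow]
  refine span_le.2 ?_ hpow'
  rintro _ ⟨_, ⟨i, hi, rfl⟩, rfl⟩
  exact hlower i hi

theorem map_prod_mem_of_drop_take_eq {n : ℕ}
    (hpow : ∀ a : A, a ^ n ∈ span k ((a ^ ·) '' Set.Iio n))
    {w : List R} (hwS : ∀ a ∈ w, a ∈ S) {s d L : ℕ} (hs : s < w.length) (hd : 0 < d)
    (heq : (w.drop s).take L = (w.drop (s + d)).take L) (hnd : n * d ≤ L + d) :
    ρ w.prod ∈ (wordSpan k S (w.length - 1)).map ρ.toLinearMap := by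
  rw [← List.drop_drop] at heq
  refine map_prod_mem_of_eq_append_flatten_replicate ρ hpow hwS (x := w.take s)
    (u := (w.drop s).take d) (y := (w.drop s).drop (n * d)) ?_ ?_
  · rw [← List.take_mul_eq_flatten_replicate_s6 heq n hnd, List.append_assoc, List.take_append_drop,
      List.take_append_drop]
  · simp only [ne_eq, List.take_eq_nil_iff, List.drop_eq_nil_iff]
    omega

theorem map_prod_mem_of_injective_windows [LinearOrder R] {T : Finset R} {c L : ℕ}
    (hgrowth : ∀ i, finrank k (wordSpan k (T : Set R) (i + 1)) ≤
      finrank k (wordSpan k (T : Set R) i) + c)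
    (hL : 0 < L) {w : List R} (hwT : ∀ a ∈ w, a ∈ (T : Set R)) (hwlen : w.length = L + c)
    (hinj : Function.Injective fun s : Fin (c + 1) => (w.drop s).take L)
    (hmin : ∀ v : List R, v.length = w.length → (∀ a ∈ v, a ∈ (T : Set R)) → v < w →
      ρ v.prod ∈ (wordSpan k (T : Set R) (L + c - 1)).map ρ.toLinearMap) :
    ρ w.prod ∈ (wordSpan k (T : Set R) (L + c - 1)).map ρ.toLinearMap := by
  classical
  set W : Fin (c + 1) → List R := fun s => (w.drop s).take L
  have hWlen (s : Fin (c + 1)) : (W s).length = L := by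
    simp only [W, List.length_take, List.length_drop]
    omega
  have hWT : ∀ s, ∀ a ∈ W s, a ∈ (T : Set R) := fun s a ha =>
    hwT a (List.mem_of_mem_drop (List.mem_of_mem_take ha))
  obtain ⟨g, hgV, s₁, hs₁⟩ := exists_sum_smul_list_prod_mem_wordSpan hgrowth hL hWT hWlen
  obtain ⟨s₀, hs₀, hmax⟩ :=
    Finset.exists_max_image {s | g s ≠ 0} W ⟨s₁, by simpa using hs₁⟩
  set x := w.take s₀
  set y := w.drop (s₀ + L)
  have hw : x ++ W s₀ ++ y = w := by
    rw [List.append_assoc, List.drop_take_append_drop, List.take_append_drop]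
  have hxT : ∀ a ∈ x, a ∈ (T : Set R) := fun a ha => hwT a (List.mem_of_mem_take ha)
  have hyT : ∀ a ∈ y, a ∈ (T : Set R) := fun a ha => hwT a (List.mem_of_mem_drop ha)
  rw [← hw]
  refine mem_of_sum_smul_mem (g := g) (v := fun s => ρ (x ++ W s ++ y).prod) ?_
    (by simpa using hs₀) ?_
  · have hsum : ρ (x.prod * (∑ s, g s • (W s).prod) * y.prod) =
        ∑ s, g s • ρ (x ++ W s ++ y).prod := by
      simp [Finset.mul_sum, Finset.sum_mul, List.prod_append, mul_assoc]
    rw [← hsum]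
    refine mem_map_of_mem (wordSpan_mono_s6 k _ ?_ (mul_mem_wordSpan (mul_mem_wordSpan
      (list_prod_mem_wordSpan hxT le_rfl) hgV) (list_prod_mem_wordSpan hyT le_rfl)))
    simp only [x, y, List.length_take, List.length_drop]
    omega
  · intro s hs hgs
    have hlt : W s < W s₀ := lt_of_le_of_ne (hmax s (by simpa using hgs)) (hinj.ne hs)
    refine hmin _ ?_ ?_ ?_
    · simp only [List.length_append, hWlen, ← hw]
    · intro a ha
      simp only [List.mem_append] at ha
      rcases ha with (ha | ha) | ha
      exacts [hxT a ha, hWT s a ha, hyT a ha]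
    · conv_rhs => rw [← hw]
      exact List.append_lt_append_of_lt_of_length_eq hlt (by rw [hWlen, hWlen]) x y y

theorem map_prod_mem_of_length_eq {T : Finset R} {c n : ℕ}
    (hpow : ∀ a : A, a ^ n ∈ span k ((a ^ ·) '' Set.Iio n))
    (hgrowth : ∀ i, finrank k (wordSpan k (T : Set R) (i + 1)) ≤
      finrank k (wordSpan k (T : Set R) i) + c)
    (hc : 0 < c) (hn : 0 < n) {w : List R} (hwT : ∀ a ∈ w, a ∈ (T : Set R))
    (hwlen : w.length = c * n + c) :
    ρ w.prod ∈ (wordSpan k (T : Set R) (c * n + c - 1)).map ρ.toLinearMap := by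
  -- any linear order on `R` will do: it only serves to order words lexicographically
  let _ : LinearOrder R := IsWellOrder.linearOrder WellOrderingRel
  by_contra hbad
  obtain ⟨w₀, ⟨hw₀len, hw₀T, hw₀bad⟩, hmin⟩ := Set.exists_min_image
    {v | v.length = c * n + c ∧ (∀ a ∈ v, a ∈ (T : Set R)) ∧
      ρ v.prod ∉ (wordSpan k (T : Set R) (c * n + c - 1)).map ρ.toLinearMap} id
    ((T.finite_toSet.lists_length_le _).subset fun v hv => ⟨hv.1.le, hv.2.1⟩)
    ⟨w, hwlen, hwT, hbad⟩
  apply hw₀bad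
  by_cases hinj : Function.Injective fun s : Fin (c + 1) => (w₀.drop s).take (c * n)
  · refine map_prod_mem_of_injective_windows ρ hgrowth (by positivity) hw₀T hw₀len hinj
      fun v hvlen hvT hlt => ?_
    by_contra hv
    exact (hmin v ⟨hvlen.trans hw₀len, hvT, hv⟩).not_gt hlt
  obtain ⟨s, s', hss', heq⟩ : ∃ s s' : Fin (c + 1), s < s' ∧
      (w₀.drop s).take (c * n) = (w₀.drop s').take (c * n) := by
    obtain ⟨a, b, hab, hne⟩ := Function.not_injective_iff.1 hinj
    rcases lt_or_gt_of_ne hne with h | h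
    exacts [⟨a, b, h, hab⟩, ⟨b, a, h, hab.symm⟩]
  have hd : n * (s' - s : ℕ) ≤ c * n + (s' - s : ℕ) := by
    rw [mul_comm c]
    exact le_add_right (Nat.mul_le_mul_left n (by omega))
  have hs : (s : ℕ) < w₀.length := by rw [hw₀len]; have := s'.is_lt; omega
  have := map_prod_mem_of_drop_take_eq ρ hpow hw₀T (L := c * n) hs (Nat.sub_pos_of_lt hss')
    (by rwa [Nat.add_sub_cancel' hss'.le]) hd
  rwa [hw₀len] at this

theorem map_wordSpan_le_of_forall_length_eq {N : ℕ}
    (hN : ∀ l : List R, (∀ a ∈ l, a ∈ S) → l.length = N + 1 →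
      ρ l.prod ∈ (wordSpan k S N).map ρ.toLinearMap) (i : ℕ) :
    (wordSpan k S i).map ρ.toLinearMap ≤ (wordSpan k S N).map ρ.toLinearMap := by
  induction i with
  | zero => exact map_mono (wordSpan_mono_s6 k S (Nat.zero_le N))
  | succ i ih =>
    rw [wordSpan, map_span, span_le]
    rintro _ ⟨_, ⟨l, hl, hlS, rfl⟩, rfl⟩
    by_cases hshort : l.length ≤ N
    · exact mem_map_of_mem (list_prod_mem_wordSpan hlS hshort)
    obtain ⟨v, hv, hρv⟩ := hN (l.take (N + 1)) (fun a ha => hlS a (List.mem_of_mem_take ha))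
      (by simp only [List.length_take]; omega)
    have hrest := list_prod_mem_wordSpan (k := k) (fun a ha => hlS a (List.mem_of_mem_drop ha))
      (le_refl (l.drop (N + 1)).length)
    refine ih ⟨v * (l.drop (N + 1)).prod, wordSpan_mono_s6 k S ?_ (mul_mem_wordSpan hv hrest), ?_⟩
    · simp only [List.length_drop]
      omega
    · rw [AlgHom.toLinearMap_apply, map_mul, ← AlgHom.toLinearMap_apply, hρv, ← map_mul,
        List.prod_take_mul_prod_drop, AlgHom.toLinearMap_apply]

theorem range_le_map_wordSpan (hS : Algebra.adjoin k S = ⊤) {N : ℕ}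
    (hN : ∀ l : List R, (∀ a ∈ l, a ∈ S) → l.length = N + 1 →
      ρ l.prod ∈ (wordSpan k S N).map ρ.toLinearMap) :
    LinearMap.range ρ.toLinearMap ≤ (wordSpan k S N).map ρ.toLinearMap := by
  rw [LinearMap.range_eq_map, ← iSup_wordSpan hS, Submodule.map_iSup]
  exact iSup_le (map_wordSpan_le_of_forall_length_eq ρ hN)

end Words

theorem card_mul_card_le_finrank_range_of_adjoin_map_eq_top {k K R m : Type*} [Field k]
    [Field K] [Algebra k K] [Ring R] [Algebra k R] [Fintype m] [DecidableEq m]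
    (ρ : R →ₐ[k] Matrix m m k)
    (hρ : Algebra.adjoin K
      ((fun M : Matrix m m k => M.map (algebraMap k K)) '' Set.range ρ) = ⊤) :
    Fintype.card m * Fintype.card m ≤ finrank k (LinearMap.range ρ.toLinearMap) := by
  set φ : Matrix m m k →ₐ[k] Matrix m m K := (Algebra.ofId k K).mapMatrix
  have hX : (fun M : Matrix m m k => M.map (algebraMap k K)) '' Set.range ρ =
      Set.range (φ.comp ρ) := by
    rw [← Set.range_comp]
    rfl
  have hspan : span K (Set.range (φ.comp ρ)) = ⊤ := by
    rw [hX] at hρ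
    rw [← Algebra.adjoin_eq_span_of_subset, hρ, Algebra.top_toSubmodule]
    rw [MonoidHom.mclosure_range, MonoidHom.coe_mrange]
    exact subset_span
  set P := LinearMap.range ρ.toLinearMap
  let b := finBasis k P
  have hle : Set.range (φ.comp ρ) ⊆ span K (Set.range fun i => φ (b i)) := by
    rintro _ ⟨r, rfl⟩
    have h := congrArg (fun p : P => φ p) (b.sum_repr ⟨ρ r, r, rfl⟩)
    simp only [AddSubmonoidClass.coe_finsetSum, SetLike.val_smul, map_sum, map_smul] at h
    rw [AlgHom.comp_apply, ← h]
    exact sum_mem fun i _ => smul_of_tower_mem _ _ (subset_span ⟨i, rfl⟩)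
  have htop : span K (Set.range fun i => φ (b i)) = ⊤ := by
    rw [eq_top_iff, ← hspan]
    exact span_le.2 hle
  calc Fintype.card m * Fintype.card m = finrank K (Matrix m m K) := by simp [finrank_matrix]
    _ = finrank K (span K (Set.range fun i => φ (b i))) := by
      rw [htop, finrank_top]
    _ ≤ Fintype.card (Fin (finrank k P)) := finrank_range_le_card _
    _ = finrank k P := Fintype.card_fin _

theorem stmt_6_general {k R : Type*} [Field k] [Ring R] [Algebra k R]
    (T : Finset R) (hT : Algebra.adjoin k (T : Set R) = ⊤)
    (c : ℕ) (hc : 1 ≤ c)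
    (hgrowth : ∀ i : ℕ, Module.finrank k (wordSpan k (T : Set R) (i + 1)) ≤
      Module.finrank k (wordSpan k (T : Set R) i) + c)
    (n : ℕ) (ρ : R →ₐ[k] Matrix (Fin n) (Fin n) k)
    (hirr : Algebra.adjoin (AlgebraicClosure k)
        ((fun M : Matrix (Fin n) (Fin n) k =>
          M.map (algebraMap k (AlgebraicClosure k))) '' Set.range ρ) = ⊤) :
    (n : ℝ) ≤ ((c : ℝ) ^ 2 + Real.sqrt ((c : ℝ) ^ 4 + 4 * (c : ℝ) ^ 2 - 4 * (c : ℝ) + 4)) / 2 := by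
  rcases Nat.eq_zero_or_pos n with rfl | hn
  · rw [Nat.cast_zero]
    positivity
  have hpow (A : Matrix (Fin n) (Fin n) k) : A ^ n ∈ span k ((A ^ ·) '' Set.Iio n) := by
    simpa using A.pow_card_mem_span_pow_lt_s6
  have hrange := range_le_map_wordSpan ρ hT (N := c * n + c - 1) fun l hlT hl =>
    map_prod_mem_of_length_eq ρ hpow hgrowth hc hn hlT (by omega)
  have hnat : n * n ≤ 1 + c * (c * n + c - 1) := by
    calc n * n ≤ finrank k (LinearMap.range ρ.toLinearMap) := by
          simpa using card_mul_card_le_finrank_range_of_adjoin_map_eq_top ρ hirr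
      _ ≤ finrank k ((wordSpan k (T : Set R) (c * n + c - 1)).map ρ.toLinearMap) :=
          Submodule.finrank_mono hrange
      _ ≤ finrank k (wordSpan k (T : Set R) (c * n + c - 1)) := finrank_map_le _ _
      _ ≤ 1 + c * (c * n + c - 1) := finrank_wordSpan_le hgrowth _
  have hreal : (n : ℝ) ^ 2 ≤ (c : ℝ) ^ 2 * n + ((c : ℝ) ^ 2 - c + 1) := by
    have hcast : ((c * n + c - 1 : ℕ) : ℝ) = c * n + c - 1 := by
      rw [Nat.cast_sub (by nlinarith)]
      push_cast
      ring
    have := (Nat.cast_le (α := ℝ)).2 hnat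
    push_cast [hcast] at this
    linarith
  convert le_half_add_sqrt_of_sq_le hreal using 4
  ring

theorem stmt_6 {k R : Type*} [Field k] [Ring R] [Algebra k R]
    (T : Finset R) (hT : Algebra.adjoin k (T : Set R) = ⊤)
    (c : ℕ) (hc : 1 ≤ c)
    (hgrowth : ∀ i : ℕ, Module.finrank k (wordSpan k (T : Set R) (i + 1)) ≤
      Module.finrank k (wordSpan k (T : Set R) i) + c)
    (hinf : ¬ FiniteDimensional k R)
    (n : ℕ) (ρ : R →ₐ[k] Matrix (Fin n) (Fin n) k)
    (hirr : Algebra.adjoin (AlgebraicClosure k)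
        ((fun M : Matrix (Fin n) (Fin n) k =>
          M.map (algebraMap k (AlgebraicClosure k))) '' Set.range ρ) = ⊤) :
    (n : ℝ) ≤ ((c : ℝ) ^ 2 + Real.sqrt ((c : ℝ) ^ 4 + 4 * (c : ℝ) ^ 2 - 4 * (c : ℝ) + 4)) / 2 :=
  stmt_6_general T hT c hc hgrowth n ρ hirr
end

section
/- Let $k$ be an uncountable field and $R$ an affine $k$-algebra (i.e., countable-dimensional over $k$). Then the Jacobson radical $J(R)$ is nil. -/
/-!
An affine algebra has countable dimension, so for `x` in the Jacobson radical the uncountably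
many elements `(x - a)⁻¹`, `a ∈ kˣ`, are linearly dependent; clearing denominators turns a
dependence relation into a nonzero polynomial killing `x`. Writing that polynomial as `X ^ m * q`
with `q(0) ≠ 0`, the element `q(x)` is a unit because `x` is quasi-regular, hence `x ^ m = 0`.
-/

open Polynomial Cardinal

theorem rank_le_aleph0_of_adjoin_eq_top {k R : Type*} [CommRing k] [StrongRankCondition k]
    [Ring R] [Algebra k R] {S : Set R} (hS : S.Countable) (h : Algebra.adjoin k S = ⊤) :
    Module.rank k R ≤ ℵ₀ := by
  have hspan : Submodule.span k (Submonoid.closure S : Set R) = ⊤ := by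
    rw [← Algebra.adjoin_eq_span, h, Algebra.top_toSubmodule]
  have hcount : (Submonoid.closure S : Set R).Countable := by
    have := hS.to_subtype
    rw [Submonoid.closure_eq_mrange]
    exact Set.countable_range _
  calc Module.rank k R = Module.rank k (⊤ : Submodule k R) := (rank_top k R).symm
    _ = Module.rank k (Submodule.span k (Submonoid.closure S : Set R)) := by rw [hspan]
    _ ≤ #(Submonoid.closure S : Set R) := rank_span_le _
    _ ≤ ℵ₀ := hcount.le_aleph0

section Domain

variable {k R : Type*} [CommRing k] [IsDomain k] [Ring R] [Algebra k R] {x : R}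

theorem isAlgebraic_of_not_linearIndependent_inverse_sub {s : Set k}
    (hs : ∀ a ∈ s, IsUnit (x - algebraMap k R a))
    (hdep : ¬ LinearIndependent k (fun a : s => Ring.inverse (x - algebraMap k R a))) :
    IsAlgebraic k x := by
  classical
  -- `∑ g a • (x - a)⁻¹ = 0` times `∏ (x - b)` is `∑ g a • ∏_{b ≠ a} (x - b) = 0`; the
  -- polynomial on the left does not vanish at a node `a₀` with `g a₀ ≠ 0`.
  obtain ⟨t, g, hsum, i₀, hi₀, hgi₀⟩ := not_linearIndependent_iff.mp hdep
  let v : s → k := Subtype.val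
  refine ⟨∑ i ∈ t, C (g i) * Lagrange.nodal (t.erase i) v, fun hzero => hgi₀ ?_, ?_⟩
  · have heval := congrArg (eval (v i₀)) hzero
    rw [eval_zero, eval_finsetSum, Finset.sum_eq_single_of_mem i₀ hi₀ fun i _ hi =>
      by rw [eval_mul, Lagrange.eval_nodal_at_node (Finset.mem_erase.mpr ⟨Ne.symm hi, hi₀⟩),
        mul_zero], eval_mul, eval_C] at heval
    refine (mul_eq_zero.mp heval).resolve_right (Lagrange.eval_nodal_not_at_node fun j hj => ?_)
    exact Subtype.val_injective.ne (Finset.ne_of_mem_erase hj).symm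
  · have hnode : ∀ i ∈ t, aeval x (Lagrange.nodal (t.erase i) v) =
        Ring.inverse (x - algebraMap k R i) * aeval x (Lagrange.nodal t v) := by
      intro i hi
      rw [Lagrange.nodal_eq_mul_nodal_erase hi, map_mul, ← mul_assoc, map_sub, aeval_X, aeval_C,
        Ring.inverse_mul_cancel _ (hs i i.2), one_mul]
    simp only [map_sum, map_mul, aeval_C, ← Algebra.smul_def]
    rw [Finset.sum_congr rfl fun i hi => by rw [hnode i hi, ← smul_mul_assoc], ← Finset.sum_mul,
      hsum, zero_mul]

end Domain

section Field

universe u v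

variable {k : Type u} {R : Type v} [Field k] [Ring R] [Algebra k R] {x : R}

theorem isUnit_aeval_of_coeff_zero_ne_zero (hx : ∀ y : R, IsUnit (1 - x * y)) {q : k[X]}
    (hq : q.coeff 0 ≠ 0) : IsUnit (aeval x q) := by
  have hfactor : q = C (q.coeff 0) * (1 - X * -(C (q.coeff 0)⁻¹ * q.divX)) := by
    conv_lhs => rw [← q.divX_mul_X_add]
    have hinv : C (q.coeff 0) * C (q.coeff 0)⁻¹ = 1 := by rw [← C_mul, mul_inv_cancel₀ hq, C_1]
    linear_combination (-(X * q.divX)) * hinv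
  rw [hfactor, map_mul, aeval_C, map_sub, map_one, map_mul, aeval_X]
  exact ((Ne.isUnit hq).map (algebraMap k R)).mul (hx _)

theorem IsAlgebraic.isNilpotent_of_forall_isUnit_one_sub_mul (halg : IsAlgebraic k x)
    (hx : ∀ y : R, IsUnit (1 - x * y)) : IsNilpotent x := by
  obtain ⟨p, hp, hpx⟩ := halg
  obtain ⟨q, hpq, hq⟩ := p.exists_eq_pow_rootMultiplicity_mul_and_not_dvd hp 0
  rw [map_zero, sub_zero] at hpq hq
  generalize p.rootMultiplicity 0 = m at hpq
  have hunit := isUnit_aeval_of_coeff_zero_ne_zero hx (mt X_dvd_iff.mpr hq)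
  refine ⟨m, hunit.mul_left_eq_zero.mp ?_⟩
  rw [← hpx, hpq, map_mul, map_pow, aeval_X]

theorem isUnit_sub_algebraMap_of_forall_isUnit_one_sub_mul (hx : ∀ y : R, IsUnit (1 - x * y))
    {a : k} (ha : a ≠ 0) : IsUnit (x - algebraMap k R a) := by
  have hfactor : x - algebraMap k R a = -algebraMap k R a * (1 - x * algebraMap k R a⁻¹) := by
    rw [neg_mul, mul_sub, mul_one, ← mul_assoc, Algebra.commutes, mul_assoc, ← map_mul,
      mul_inv_cancel₀ ha, map_one, mul_one, neg_sub]
  rw [hfactor]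
  exact ((Ne.isUnit ha).map (algebraMap k R)).neg.mul (hx _)

theorem isAlgebraic_of_lift_rank_lt_card [Infinite k]
    (hrank : lift.{u} (Module.rank k R) < lift.{v} #k) (hx : ∀ y : R, IsUnit (1 - x * y)) :
    IsAlgebraic k x := by
  have hcard : #({0}ᶜ : Set k) = #k :=
    mk_compl_of_infinite _ (by simpa using one_lt_aleph0.trans_le (aleph0_le_mk k))
  refine isAlgebraic_of_not_linearIndependent_inverse_sub
    (fun a ha => isUnit_sub_algebraMap_of_forall_isUnit_one_sub_mul hx ha) fun hli => ?_
  exact hrank.not_ge (hcard ▸ hli.cardinal_lift_le_rank)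

end Field

theorem stmt_14 {k R : Type*} [Field k] [Uncountable k] [Ring R] [Algebra k R]
    (haffine : ∃ S : Finset R, Algebra.adjoin k (S : Set R) = ⊤) :
    ∀ x : R, (∀ y : R, IsUnit (1 - x * y)) → IsNilpotent x := by
  intro x hx
  obtain ⟨S, hS⟩ := haffine
  have hrank := rank_le_aleph0_of_adjoin_eq_top S.countable_toSet hS
  have halg : IsAlgebraic k x :=
    isAlgebraic_of_lift_rank_lt_card ((lift_le_aleph0.mpr hrank).trans_lt
      (aleph0_lt_lift.mpr aleph0_lt_mk)) hx
  exact halg.isNilpotent_of_forall_isUnit_one_sub_mul hx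
end
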